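/- Let ρ, σ be full-rank density operators on a finite-dimensional Hilbert space such that ρ^{-1/2}σρ^{-1/2} has a non-degenerate maximal eigenvalue. Then for every x with 0 ≤ x ≤ λ_min(ρ), β_{1−x}(ρ‖σ) = x · exp(−D_{+∞}(ρ‖σ)), where D_{+∞}(ρ‖σ) := log λ_max(σ^{-1/2}ρσ^{-1/2}). -/

import Mathlib

open Matrix Filter
open scoped Matrix ComplexOrder

variable {n : Type*} [Fintype n] [DecidableEq n]

/-- `ρ` is a density operator: positive semidefinite with unit trace. -/
def IsDensity (ρ : Matrix n n ℂ) : Prop := ρ.PosSemidef ∧ ρ.trace = 1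

/-- Optimal type-II error `β_x(ρ‖σ)` in binary quantum hypothesis testing:
the minimum of `Tr(σQ)` over tests `0 ≤ Q ≤ 1` with `Tr(ρQ) ≥ 1 − x`. -/
noncomputable def betaErr (x : ℝ) (ρ σ : Matrix n n ℂ) : ℝ :=
  sInf {v : ℝ | ∃ Q : Matrix n n ℂ, Q.PosSemidef ∧ (1 - Q).PosSemidef ∧
    1 - x ≤ ((ρ * Q).trace).re ∧ v = ((σ * Q).trace).re}

open Classical in
/-- Real power of a Hermitian matrix via the spectral decomposition. -/
noncomputable def hrpow (A : Matrix n n ℂ) (α : ℝ) : Matrix n n ℂ :=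
  if h : A.IsHermitian then
    (h.eigenvectorUnitary : Matrix n n ℂ) *
      Matrix.diagonal (fun i => ((h.eigenvalues i ^ α : ℝ) : ℂ)) *
      star (h.eigenvectorUnitary : Matrix n n ℂ)
  else A

open Classical in
/-- Minimal eigenvalue of a Hermitian matrix. -/
noncomputable def lamMin (A : Matrix n n ℂ) : ℝ :=
  if h : A.IsHermitian then ⨅ i, h.eigenvalues i else 0

open Classical in
/-- Maximal eigenvalue of a Hermitian matrix. -/
noncomputable def lamMax (A : Matrix n n ℂ) : ℝ :=
  if h : A.IsHermitian then ⨆ i, h.eigenvalues i else 0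

open Classical in
/-- Pinching map `P_σ(X)` with respect to the eigenspaces of `σ`:
in the eigenbasis of `σ`, off-diagonal blocks between distinct eigenvalues are erased. -/
noncomputable def pinch (σ X : Matrix n n ℂ) : Matrix n n ℂ :=
  if h : σ.IsHermitian then
    (h.eigenvectorUnitary : Matrix n n ℂ) *
      (Matrix.of fun i j =>
        if h.eigenvalues i = h.eigenvalues j then
          (star (h.eigenvectorUnitary : Matrix n n ℂ) * X *
            (h.eigenvectorUnitary : Matrix n n ℂ)) i j
        else 0) *
      star (h.eigenvectorUnitary : Matrix n n ℂ)
  else X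

/-- Trace distance `T(A,B) = (1/2)‖A − B‖₁`. -/
noncomputable def traceDist (A B : Matrix n n ℂ) : ℝ :=
  (1 / 2) * ((((Matrix.posSemidef_conjTranspose_mul_self (A - B)).1.eigenvectorUnitary : Matrix n n ℂ) *
    Matrix.diagonal (fun i => ((Real.sqrt ((Matrix.posSemidef_conjTranspose_mul_self (A - B)).1.eigenvalues i) : ℝ) : ℂ)) *
    star ((Matrix.posSemidef_conjTranspose_mul_self (A - B)).1.eigenvectorUnitary : Matrix n n ℂ)).trace).re

/-- `n`-fold tensor (Kronecker) power of a matrix. -/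
noncomputable def tensorPow {d : ℕ} (ρ : Matrix (Fin d) (Fin d) ℂ) (m : ℕ) :
    Matrix (Fin m → Fin d) (Fin m → Fin d) ℂ :=
  fun f g => ∏ i, ρ (f i) (g i)

/-- A quantum channel from a `d₁`- to a `d₂`-dimensional system, presented by
Kraus operators (equivalently, a completely positive trace-preserving map). -/
structure QChannel (d₁ d₂ : ℕ) where
  k : ℕ
  K : Fin k → Matrix (Fin d₂) (Fin d₁) ℂ
  tp : ∑ i, (K i)ᴴ * K i = 1

/-- Action of a quantum channel on a matrix. -/
noncomputable def QChannel.apply {d₁ d₂ : ℕ} (E : QChannel d₁ d₂)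
    (X : Matrix (Fin d₁) (Fin d₁) ℂ) : Matrix (Fin d₂) (Fin d₂) ℂ :=
  ∑ i, E.K i * X * (E.K i)ᴴ

/-- Classical Rényi relative entropy of a (commuting) pair of matrices,
`D_α(A‖B) = (1/(α−1)) ln Tr(A^α B^{1−α})`. -/
noncomputable def renyiDiv (α : ℝ) (A B : Matrix n n ℂ) : ℝ :=
  (α - 1)⁻¹ * Real.log (((hrpow A α * hrpow B (1 - α)).trace).re)

/-- Minimal (sandwiched) Rényi relative entropy, `α ≤ 1/2` branch:
`D̃_α(ρ‖σ) = (1/(α−1)) ln Tr((√σ ρ^{α/(1−α)} √σ)^{1−α})`. -/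
noncomputable def minRenyiDiv (α : ℝ) (ρ σ : Matrix n n ℂ) : ℝ :=
  (α - 1)⁻¹ * Real.log
    (((hrpow (hrpow σ (1 / 2) * hrpow ρ (α / (1 - α)) * hrpow σ (1 / 2)) (1 - α)).trace).re)


/-!
Put `N = σ^{-1/2}` and `L = λ_max(N ρ N)`, so that `exp(-D_{+∞}(ρ‖σ)) = 1 / L`. Conjugating
`N ρ N ≤ L` by `σ^{1/2}` gives `ρ ≤ L σ`, hence every test `Q` with `Tr(ρQ) ≥ x` has
`Tr(σQ) ≥ x / L`. Conversely, for a unit top eigenvector `v` of `N ρ N` the vector `w = N v` has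
`⟨w|σ|w⟩ = 1` and `⟨w|ρ|w⟩ = L`, so the rank-one test `Q = (x / L) |w⟩⟨w|` attains `x / L`;
it is a test (`Q ≤ 1`) because `x ‖w‖² ≤ λ_min(ρ) ‖w‖² ≤ ⟨w|ρ|w⟩ = L`.
-/

open scoped MatrixOrder

namespace Matrix

lemma hrpow_eq_rpow {A : Matrix n n ℂ} (hA : A.PosSemidef) (α : ℝ) : hrpow A α = A ^ α := by
  rw [CFC.rpow_eq_cfc_real hA.nonneg, hA.1.cfc_eq, IsHermitian.cfc, hrpow, dif_pos hA.1,
    Unitary.conjStarAlgAut_apply]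
  rfl

namespace IsHermitian

variable {A : Matrix n n ℂ} (hA : A.IsHermitian)
include hA

lemma le_smul_one_of_eigenvalues_le {c : ℝ} (h : ∀ i, hA.eigenvalues i ≤ c) :
    A ≤ c • (1 : Matrix n n ℂ) := by
  rw [← Algebra.algebraMap_eq_smul_one, le_algebraMap_iff_spectrum_le hA.isSelfAdjoint,
    hA.spectrum_real_eq_range_eigenvalues]
  rintro _ ⟨i, rfl⟩
  exact h i

lemma smul_one_le_of_le_eigenvalues {c : ℝ} (h : ∀ i, c ≤ hA.eigenvalues i) :
    c • (1 : Matrix n n ℂ) ≤ A := by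
  rw [← Algebra.algebraMap_eq_smul_one, algebraMap_le_iff_le_spectrum hA.isSelfAdjoint,
    hA.spectrum_real_eq_range_eigenvalues]
  rintro _ ⟨i, rfl⟩
  exact h i

lemma lamMax_eq : lamMax A = ⨆ i, hA.eigenvalues i := by
  rw [lamMax, dif_pos hA]

lemma eigenvalues_le_lamMax (i : n) : hA.eigenvalues i ≤ lamMax A :=
  hA.lamMax_eq ▸ le_ciSup (Set.finite_range _).bddAbove i

lemma le_lamMax_smul_one : A ≤ lamMax A • (1 : Matrix n n ℂ) :=
  hA.le_smul_one_of_eigenvalues_le hA.eigenvalues_le_lamMax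

lemma lamMin_smul_one_le : lamMin A • (1 : Matrix n n ℂ) ≤ A :=
  hA.smul_one_le_of_le_eigenvalues fun i => by
    rw [lamMin, dif_pos hA]
    exact ciInf_le (Set.finite_range _).bddBelow i

lemma exists_mulVec_eq_lamMax_smul [Nonempty n] :
    ∃ v : n → ℂ, star v ⬝ᵥ v = 1 ∧ A *ᵥ v = lamMax A • v := by
  obtain ⟨i, hi⟩ := exists_eq_ciSup_of_finite (f := hA.eigenvalues)
  refine ⟨hA.eigenvectorBasis i, ?_, ?_⟩
  · have h := orthonormal_iff_ite.mp hA.eigenvectorBasis.orthonormal i i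
    rwa [EuclideanSpace.inner_eq_star_dotProduct, if_pos rfl, dotProduct_comm] at h
  · rw [hA.mulVec_eigenvectorBasis i, hi, hA.lamMax_eq]

end IsHermitian

lemma PosDef.lamMax_pos [Nonempty n] {A : Matrix n n ℂ} (hA : A.PosDef) : 0 < lamMax A :=
  (hA.eigenvalues_pos (Classical.arbitrary n)).trans_le (hA.1.eigenvalues_le_lamMax _)

lemma PosDef.rpow_mul_mul_rpow {ρ σ : Matrix n n ℂ} (hρ : ρ.PosDef) (hσ : σ.PosDef)
    (α : ℝ) : (σ ^ α * ρ * σ ^ α).PosDef := by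
  have hσ' : IsStrictlyPositive σ := isStrictlyPositive_iff_posDef.mpr hσ
  have hN : (σ ^ α)ᴴ = σ ^ α := CFC.rpow_nonneg.isSelfAdjoint
  have hinj : Function.Injective (σ ^ α).mulVec :=
    Function.LeftInverse.injective (g := (σ ^ (-α)).mulVec) fun v => by
      rw [mulVec_mulVec, CFC.rpow_neg_mul_rpow, one_mulVec]
  simpa only [hN] using hρ.conjTranspose_mul_mul_same hinj

omit [DecidableEq n] in
lemma star_mulVec_dotProduct_mulVec (A B : Matrix n n ℂ) (v : n → ℂ) :
    star (B *ᵥ v) ⬝ᵥ (A *ᵥ (B *ᵥ v)) = star v ⬝ᵥ ((Bᴴ * A * B) *ᵥ v) := by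
  rw [star_mulVec, mulVec_mulVec, dotProduct_mulVec, vecMul_vecMul, ← dotProduct_mulVec,
    ← mul_assoc]

omit [DecidableEq n] in
lemma dotProduct_mulVec_le_of_le {A B : Matrix n n ℂ} (hAB : A ≤ B) (v : n → ℂ) :
    star v ⬝ᵥ (A *ᵥ v) ≤ star v ⬝ᵥ (B *ᵥ v) := by
  have h := (le_iff.mp hAB).dotProduct_mulVec_nonneg v
  rwa [sub_mulVec, dotProduct_sub, sub_nonneg] at h

lemma PosSemidef.trace_mul_nonneg {A B : Matrix n n ℂ} (hA : A.PosSemidef) (hB : B.PosSemidef) :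
    0 ≤ (A * B).trace := by
  obtain ⟨C, rfl⟩ := CStarAlgebra.nonneg_iff_eq_star_mul_self.mp hB.nonneg
  rw [← mul_assoc, trace_mul_comm, ← mul_assoc, star_eq_conjTranspose]
  exact (hA.mul_mul_conjTranspose_same C).trace_nonneg

lemma re_trace_mul_le_of_le {ρ σ Q : Matrix n n ℂ} {L : ℝ} (hρσ : ρ ≤ L • σ)
    (hQ : Q.PosSemidef) : (ρ * Q).trace.re ≤ L * (σ * Q).trace.re := by
  have h := (Complex.le_def.mp ((le_iff.mp hρσ).trace_mul_nonneg hQ)).1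
  rw [sub_mul, trace_sub, smul_mul_assoc, trace_smul, Complex.sub_re, Complex.smul_re] at h
  simpa [sub_nonneg] using h

omit [DecidableEq n] in
lemma trace_mul_vecMulVec_star (A : Matrix n n ℂ) (u : n → ℂ) :
    (A * vecMulVec u (star u)).trace = star u ⬝ᵥ (A *ᵥ u) := by
  rw [mul_vecMulVec, trace_vecMulVec, dotProduct_comm]

lemma posSemidef_one_sub_smul_vecMulVec (u : n → ℂ) {c : ℝ} (hc : 0 ≤ c)
    (hcu : c * (star u ⬝ᵥ u).re ≤ 1) : (1 - c • vecMulVec u (star u)).PosSemidef := by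
  set V := vecMulVec u (star u)
  set t := (star u ⬝ᵥ u).re
  have ht : star u ⬝ᵥ u = t := by
    have := Complex.nonneg_iff.mp (dotProduct_star_self_nonneg u)
    exact Complex.ext rfl (by simpa using this.2.symm)
  have hVV : V * V = t • V := by
    rw [vecMulVec_mul_vecMulVec, ht, vecMulVec_smul, Complex.coe_smul]
  have hsq : (1 - c • V)ᴴ * (1 - c • V) = (1 - c • V) - (c * (1 - c * t)) • V := by
    rw [conjTranspose_sub, conjTranspose_one, conjTranspose_smul,
      (posSemidef_vecMulVec_self_star u).1.eq, star_trivial]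
    simp only [sub_mul, mul_sub, one_mul, mul_one, smul_mul_smul_comm]
    rw [hVV]
    module
  have key : 1 - c • V = (1 - c • V)ᴴ * (1 - c • V) + (c * (1 - c * t)) • V := by
    rw [hsq, sub_add_cancel]
  rw [key]
  exact (posSemidef_conjTranspose_mul_self _).add <|
    (posSemidef_vecMulVec_self_star u).smul (mul_nonneg hc (by linarith))

end Matrix

lemma betaErr_eq_of_forall_le {x : ℝ} {ρ σ Q : Matrix n n ℂ} (hQ : Q.PosSemidef)
    (hQ₁ : (1 - Q).PosSemidef) (hρQ : 1 - x ≤ (ρ * Q).trace.re)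
    (hmin : ∀ Q' : Matrix n n ℂ, Q'.PosSemidef → (1 - Q').PosSemidef →
      1 - x ≤ (ρ * Q').trace.re → (σ * Q).trace.re ≤ (σ * Q').trace.re) :
    betaErr x ρ σ = (σ * Q).trace.re :=
  IsLeast.csInf_eq ⟨⟨Q, hQ, hQ₁, hρQ, rfl⟩, by
    rintro _ ⟨Q', hQ', hQ₁', hρQ', rfl⟩
    exact hmin Q' hQ' hQ₁' hρQ'⟩

lemma betaErr_one_sub_eq_div {ρ σ : Matrix n n ℂ} {L x : ℝ} (hL : 0 < L) (hρσ : ρ ≤ L • σ)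
    (w : n → ℂ) (hσw : star w ⬝ᵥ (σ *ᵥ w) = 1) (hρw : star w ⬝ᵥ (ρ *ᵥ w) = L)
    (hx : 0 ≤ x) (hxw : x * (star w ⬝ᵥ w).re ≤ L) :
    betaErr (1 - x) ρ σ = x / L := by
  have hc : 0 ≤ x / L := div_nonneg hx hL.le
  have hre : ∀ A : Matrix n n ℂ, (A * ((x / L) • vecMulVec w (star w))).trace.re =
      x / L * (star w ⬝ᵥ (A *ᵥ w)).re := fun A => by
    rw [mul_smul_comm, trace_smul, trace_mul_vecMulVec_star, Complex.smul_re, smul_eq_mul]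
  have hσQ : (σ * ((x / L) • vecMulVec w (star w))).trace.re = x / L := by
    rw [hre, hσw, Complex.one_re, mul_one]
  rw [← hσQ]
  refine betaErr_eq_of_forall_le ((posSemidef_vecMulVec_self_star w).smul hc)
    (posSemidef_one_sub_smul_vecMulVec w hc ?_) ?_ fun Q hQ _ hρQ => ?_
  · rwa [div_mul_eq_mul_div, div_le_one hL]
  · rw [hre, hρw, Complex.ofReal_re, div_mul_cancel₀ x hL.ne', sub_sub_cancel]
  · rw [hσQ, div_le_iff₀' hL]
    linarith [re_trace_mul_le_of_le hρσ hQ]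

theorem betaErr_one_sub_eq_div_lamMax [Nonempty n] {ρ σ : Matrix n n ℂ} (hρ : ρ.PosDef)
    (hσ : σ.PosDef) {x : ℝ} (hx₀ : 0 ≤ x) (hx : x ≤ lamMin ρ) :
    betaErr (1 - x) ρ σ = x / lamMax (σ ^ (-(1 / 2) : ℝ) * ρ * σ ^ (-(1 / 2) : ℝ)) := by
  have hσ' : IsStrictlyPositive σ := isStrictlyPositive_iff_posDef.mpr hσ
  set S := σ ^ (1 / 2 : ℝ)
  set N := σ ^ (-(1 / 2) : ℝ)
  have hSN : S * N = 1 := CFC.rpow_mul_rpow_neg _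
  have hNS : N * S = 1 := CFC.rpow_neg_mul_rpow _
  have hSS : S * S = σ := by rw [← CFC.rpow_add hσ'.isUnit, add_halves, CFC.rpow_one σ]
  have hS : IsSelfAdjoint S := CFC.rpow_nonneg.isSelfAdjoint
  have hN : Nᴴ = N := CFC.rpow_nonneg.isSelfAdjoint
  have hM : (N * ρ * N).PosDef := hρ.rpow_mul_mul_rpow hσ _
  set L := lamMax (N * ρ * N)
  have hρσ : ρ ≤ L • σ := by
    have h := hS.conjugate_le_conjugate hM.1.le_lamMax_smul_one
    rwa [mul_smul_comm, smul_mul_assoc, mul_one, hSS, ← mul_assoc, ← mul_assoc, hSN, one_mul,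
      mul_assoc, hNS, mul_one] at h
  obtain ⟨v, hv, hMv⟩ := hM.1.exists_mulVec_eq_lamMax_smul
  have hρw : star (N *ᵥ v) ⬝ᵥ (ρ *ᵥ (N *ᵥ v)) = L := by
    rw [star_mulVec_dotProduct_mulVec, hN, hMv, dotProduct_smul, hv, Complex.real_smul, mul_one]
  refine betaErr_one_sub_eq_div hM.lamMax_pos hρσ (N *ᵥ v) ?_ hρw hx₀ ?_
  · rw [star_mulVec_dotProduct_mulVec, hN, ← hSS, ← mul_assoc, hNS, one_mul, hSN, one_mulVec,
      hv]
  · have hmin :=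
      Complex.le_def.mp (dotProduct_mulVec_le_of_le hρ.1.lamMin_smul_one_le (N *ᵥ v))
    rw [hρw, smul_mulVec, one_mulVec, dotProduct_smul, Complex.smul_re, Complex.ofReal_re] at hmin
    have hw := Complex.le_def.mp (dotProduct_star_self_nonneg (N *ᵥ v))
    exact (mul_le_mul_of_nonneg_right hx hw.1).trans hmin.1

theorem betaErr_one_sub_eq_general {d : ℕ} (hd : 0 < d) (ρ σ : Matrix (Fin d) (Fin d) ℂ)
    (hρ : ρ.PosDef) (hσ : σ.PosDef)
    (x : ℝ) (hx0 : 0 ≤ x) (hx : x ≤ lamMin ρ) :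
    betaErr (1 - x) ρ σ =
      x * Real.exp (-(Real.log (lamMax (hrpow σ (-(1 / 2)) * ρ * hrpow σ (-(1 / 2)))))) := by
  have : Nonempty (Fin d) := ⟨⟨0, hd⟩⟩
  rw [hrpow_eq_rpow hσ.posSemidef, Real.exp_neg,
    Real.exp_log (hρ.rpow_mul_mul_rpow hσ _).lamMax_pos, ← div_eq_mul_inv,
    betaErr_one_sub_eq_div_lamMax hρ hσ hx0 hx]

/-- Single-shot extreme-deviation hypothesis testing, high-error branch:
for `0 ≤ x ≤ λ_min(ρ)`, `β_{1−x}(ρ‖σ) = x·exp(−D_{+∞}(ρ‖σ))` where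
`D_{+∞}(ρ‖σ) = ln λ_max(σ^{-1/2}ρσ^{-1/2})`. -/
theorem betaErr_one_sub_eq {d : ℕ} (hd : 0 < d) (ρ σ : Matrix (Fin d) (Fin d) ℂ)
    (hρ : ρ.PosDef) (hσ : σ.PosDef) (hρtr : ρ.trace = 1) (hσtr : σ.trace = 1)
    (hM : (hrpow ρ (-(1 / 2)) * σ * hrpow ρ (-(1 / 2))).IsHermitian)
    (hnd : ∃! i : Fin d, hM.eigenvalues i = ⨆ j, hM.eigenvalues j)
    (x : ℝ) (hx0 : 0 ≤ x) (hx : x ≤ lamMin ρ) :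
    betaErr (1 - x) ρ σ =
      x * Real.exp (-(Real.log (lamMax (hrpow σ (-(1 / 2)) * ρ * hrpow σ (-(1 / 2)))))) :=
  betaErr_one_sub_eq_general hd ρ σ hρ hσ x hx0 hx
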